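/- For every m ∈ ℤ and n ∈ ℕ, the functions f_{m,n} satisfy the eigenvalue equation d(d*(f_{m,n})) = 4(n + m₊ + 1) f_{m,n} pointwise on ℂ, where m₊ = max(m,0). -/

import Mathlib

open MeasureTheory

/-- Generalized Laguerre polynomial
`L_n^α(x) = Σ_{k=0}^n (-1)^k binom(n+α, n-k) x^k / k!`, where
`binom(n+α, n-k) = Γ(n+α+1)/(Γ(α+k+1)·(n-k)!)`. -/
noncomputable def laguerre (α : ℝ) (n : ℕ) (x : ℝ) : ℝ :=
  ∑ k ∈ Finset.range (n + 1),
    (-1 : ℝ) ^ k *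
      (Real.Gamma ((n : ℝ) + α + 1) /
        (Real.Gamma (α + (k : ℝ) + 1) * (Nat.factorial (n - k) : ℝ))) *
      x ^ k / (Nat.factorial k : ℝ)

/-- The eigenfunctions `f_{m,n}` of the free Weyl operator with homogeneous
magnetic field, identifying `ℝ²` with `ℂ`. -/
noncomputable def fmn (m : ℤ) (n : ℕ) (z : ℂ) : ℂ :=
  (Real.sqrt ((Nat.factorial n : ℝ) / (Real.pi * (Nat.factorial (n + m.natAbs) : ℝ))) : ℂ) *
    (Real.exp (-(‖z‖) ^ 2 / 2) : ℂ) *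
    (if 0 ≤ m then z ^ m.natAbs else (starRingEnd ℂ z) ^ m.natAbs) *
    ((laguerre (m.natAbs : ℝ) n ((‖z‖) ^ 2) : ℝ) : ℂ)

/-- Wirtinger derivative `∂u = (1/2)(∂u/∂x₁ - i ∂u/∂x₂)`. -/
noncomputable def wirtDeriv (u : ℂ → ℂ) (z : ℂ) : ℂ :=
  (1/2) * (fderiv ℝ u z 1 - Complex.I * fderiv ℝ u z Complex.I)

/-- Conjugate Wirtinger derivative `∂̄u = (1/2)(∂u/∂x₁ + i ∂u/∂x₂)`. -/
noncomputable def wirtDerivBar (u : ℂ → ℂ) (z : ℂ) : ℂ :=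
  (1/2) * (fderiv ℝ u z 1 + Complex.I * fderiv ℝ u z Complex.I)

/-- The annihilation-type operator `(d u)(z) = -2i(∂u(z) + (conj z / 2) u(z))`. -/
noncomputable def opD (u : ℂ → ℂ) (z : ℂ) : ℂ :=
  -2 * Complex.I * (wirtDeriv u z + (starRingEnd ℂ z) / 2 * u z)

/-- The creation-type operator `(d* u)(z) = 2i(-∂̄u(z) + (z/2) u(z))`. -/
noncomputable def opDstar (u : ℂ → ℂ) (z : ℂ) : ℂ :=
  2 * Complex.I * (-(wirtDerivBar u z) + z / 2 * u z)

/-! Writing `u = e^{-|z|²/2} g`, the Gaussian conjugates `d` to `-2i ∂` and `d*` to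
`2i (z - ∂̄)`, so `d d* u = 4 e^{-|z|²/2} (g + z ∂g - ∂∂̄g)`. For `f_{m,n}` the factor `g` is
`Σ_k c_k z^{p+k} z̄^{q+k}` with `{p, q} = {|m|, 0}` and `c_k` the Laguerre coefficients. On these
monomials `z ∂` acts by `p + k`, while `∂∂̄` lowers both exponents with the factor
`(p + k)(q + k) = k (|m| + k)` (as `pq = 0`). The recurrence
`c_{k+1} (k + 1)(|m| + k + 1) = c_k (k - n)` of the Laguerre coefficients then turns `∂∂̄g` into
`Σ_k (k - n) c_k z^{p+k} z̄^{q+k}`, and the bracket becomes `(n + p + 1) g`. -/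

open Complex ComplexConjugate Finset

/-- `u` is real-differentiable at `z` with Wirtinger derivatives `∂u(z) = a`, `∂̄u(z) = b`. -/
def HasWirtingerAt (u : ℂ → ℂ) (a b z : ℂ) : Prop :=
  HasFDerivAt u (a • ContinuousLinearMap.id ℝ ℂ + b • conjCLE.toContinuousLinearMap) z

namespace HasWirtingerAt

variable {u v : ℂ → ℂ} {a b c d z : ℂ}

theorem of_hasFDerivAt {f' : ℂ →L[ℝ] ℂ} (h : HasFDerivAt u f' z)
    (hf' : ∀ w, f' w = a * w + b * conj w) : HasWirtingerAt u a b z := by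
  refine h.congr_fderiv (ContinuousLinearMap.ext fun w => ?_)
  simp [hf']

theorem congr_deriv {a' b' : ℂ} (h : HasWirtingerAt u a b z) (ha : a = a') (hb : b = b') :
    HasWirtingerAt u a' b' z :=
  ha ▸ hb ▸ h

theorem wirtDeriv_eq (h : HasWirtingerAt u a b z) : wirtDeriv u z = a := by
  simp only [wirtDeriv, h.fderiv, add_apply, smul_apply, ContinuousLinearMap.id_apply,
    ContinuousLinearEquiv.coe_coe, conjCLE_apply, conj_I, map_one, smul_eq_mul]
  ring_nf; simp only [I_sq]; ring

theorem wirtDerivBar_eq (h : HasWirtingerAt u a b z) : wirtDerivBar u z = b := by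
  simp only [wirtDerivBar, h.fderiv, add_apply, smul_apply, ContinuousLinearMap.id_apply,
    ContinuousLinearEquiv.coe_coe, conjCLE_apply, conj_I, map_one, smul_eq_mul]
  ring_nf; simp only [I_sq]; ring

theorem const (c z : ℂ) : HasWirtingerAt (fun _ => c) 0 0 z :=
  of_hasFDerivAt (hasFDerivAt_const c z) fun w => by simp

theorem id (z : ℂ) : HasWirtingerAt (fun w => w) 1 0 z :=
  of_hasFDerivAt (hasFDerivAt_id z) fun w => by simp

theorem pow (p : ℕ) (z : ℂ) : HasWirtingerAt (fun w => w ^ p) (p * z ^ (p - 1)) 0 z :=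
  of_hasFDerivAt ((hasDerivAt_pow p z).hasFDerivAt.restrictScalars ℝ) fun w => by
    simp; ring

theorem conj_pow (q : ℕ) (z : ℂ) :
    HasWirtingerAt (fun w => conj w ^ q) 0 (q * conj z ^ (q - 1)) z :=
  of_hasFDerivAt (((hasDerivAt_pow q (conj z)).hasFDerivAt.restrictScalars ℝ).comp z
    conjCLE.hasFDerivAt) fun w => by simp; ring

theorem mul (hu : HasWirtingerAt u a b z) (hv : HasWirtingerAt v c d z) :
    HasWirtingerAt (fun w => u w * v w) (a * v z + u z * c) (b * v z + u z * d) z :=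
  of_hasFDerivAt (HasFDerivAt.mul (𝕜 := ℝ) hu hv) fun w => by simp; ring

theorem sub (hu : HasWirtingerAt u a b z) (hv : HasWirtingerAt v c d z) :
    HasWirtingerAt (fun w => u w - v w) (a - c) (b - d) z :=
  of_hasFDerivAt (HasFDerivAt.sub hu hv) fun w => by simp; ring

theorem const_mul (c : ℂ) (hu : HasWirtingerAt u a b z) :
    HasWirtingerAt (fun w => c * u w) (c * a) (c * b) z :=
  ((const c z).mul hu).congr_deriv (by ring) (by ring)

theorem exp (hu : HasWirtingerAt u a b z) :
    HasWirtingerAt (fun w => exp (u w)) (exp (u z) * a) (exp (u z) * b) z :=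
  of_hasFDerivAt (HasFDerivAt.cexp hu) fun w => by simp; ring

theorem sum {ι : Type*} {s : Finset ι} {u : ι → ℂ → ℂ} {a b : ι → ℂ}
    (h : ∀ i ∈ s, HasWirtingerAt (u i) (a i) (b i) z) :
    HasWirtingerAt (fun w => ∑ i ∈ s, u i w) (∑ i ∈ s, a i) (∑ i ∈ s, b i) z :=
  of_hasFDerivAt (HasFDerivAt.fun_sum h) fun w => by
    simp [sum_mul, sum_add_distrib]

end HasWirtingerAt

noncomputable def gaussian (z : ℂ) : ℂ := exp (-(z * conj z) / 2)

theorem ofReal_exp_neg_norm_sq_div_two (z : ℂ) :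
    ((Real.exp (-‖z‖ ^ 2 / 2) : ℝ) : ℂ) = gaussian z := by
  rw [gaussian, mul_conj, normSq_eq_norm_sq]
  push_cast
  ring_nf

theorem hasWirtingerAt_gaussian (z : ℂ) :
    HasWirtingerAt gaussian (-conj z / 2 * gaussian z) (-z / 2 * gaussian z) z := by
  have hq : HasWirtingerAt (fun w => -(w * conj w) / 2) (-conj z / 2) (-z / 2) z := by
    convert ((HasWirtingerAt.id z).mul (HasWirtingerAt.conj_pow 1 z)).const_mul (-1 / 2) using 1
    · ext w; ring
    · simp; ring
    · simp; ring
  exact hq.exp.congr_deriv (by rw [gaussian]; ring) (by rw [gaussian]; ring)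

section GaussianConjugation

variable {g : ℂ → ℂ} {a b z : ℂ}

theorem opD_gaussian_mul (hg : HasWirtingerAt g a b z) :
    opD (fun w => gaussian w * g w) z = -2 * I * gaussian z * a := by
  rw [opD, ((hasWirtingerAt_gaussian z).mul hg).wirtDeriv_eq]
  ring

theorem opDstar_gaussian_mul (hg : HasWirtingerAt g a b z) :
    opDstar (fun w => gaussian w * g w) z = gaussian z * (2 * I * (z * g z - b)) := by
  rw [opDstar, ((hasWirtingerAt_gaussian z).mul hg).wirtDerivBar_eq]
  ring

theorem opD_opDstar_gaussian_mul {ga gb : ℂ → ℂ} {c : ℂ}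
    (hg : ∀ w, HasWirtingerAt g (ga w) (gb w) w) (hgb : HasWirtingerAt gb a c z) :
    opD (opDstar (fun w => gaussian w * g w)) z = 4 * gaussian z * (g z + z * ga z - a) := by
  have hstar : opDstar (fun w => gaussian w * g w) =
      fun w => gaussian w * (2 * I * (w * g w - gb w)) :=
    funext fun w => opDstar_gaussian_mul (hg w)
  rw [hstar, opD_gaussian_mul ((((HasWirtingerAt.id z).mul (hg z)).sub hgb).const_mul (2 * I))]
  linear_combination (-4 * gaussian z * (g z + z * ga z - a)) * I_mul_I

end GaussianConjugation

noncomputable def zConjMonomial (a b : ℕ) (z : ℂ) : ℂ := z ^ a * conj z ^ b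

theorem hasWirtingerAt_zConjMonomial (a b : ℕ) (z : ℂ) :
    HasWirtingerAt (zConjMonomial a b) (a * zConjMonomial (a - 1) b z)
      (b * zConjMonomial a (b - 1) z) z :=
  ((HasWirtingerAt.pow a z).mul (HasWirtingerAt.conj_pow b z)).congr_deriv
    (by simp only [zConjMonomial]; ring) (by simp only [zConjMonomial]; ring)

theorem mul_natCast_mul_zConjMonomial_pred (a b : ℕ) (z : ℂ) :
    z * (a * zConjMonomial (a - 1) b z) = a * zConjMonomial a b z := by
  cases a with
  | zero => simp
  | succ a => simp only [zConjMonomial, Nat.add_sub_cancel, pow_succ]; ring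

section LaguerreSum

variable (c : ℕ → ℂ) {n p q : ℕ}

theorem sum_mul_zConjMonomial_pred_pred (hpq : p * q = 0)
    (hc : ∀ j < n, c (j + 1) * ((p + j + 1) * (q + j + 1)) = c j * (j - n)) (z : ℂ) :
    ∑ k ∈ range (n + 1),
        c k * ((q + k : ℕ) * ((p + k : ℕ) * zConjMonomial (p + k - 1) (q + k - 1) z))
      = ∑ k ∈ range (n + 1), c k * ((k - n) * zConjMonomial (p + k) (q + k) z) := by
  have hpqC : (p : ℂ) * q = 0 := by exact_mod_cast hpq
  rw [sum_range_succ', sum_range_succ]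
  simp only [Nat.cast_add, Nat.add_sub_cancel, ← add_assoc, Nat.cast_one, sub_self, zero_mul,
    mul_zero, add_zero, mul_left_comm (q : ℂ) p, ← mul_assoc (p : ℂ), hpqC]
  refine sum_congr rfl fun j hj => ?_
  linear_combination zConjMonomial (p + j) (q + j) z * hc j (mem_range.mp hj)

theorem opD_opDstar_gaussian_mul_sum (hpq : p * q = 0)
    (hc : ∀ j < n, c (j + 1) * ((p + j + 1) * (q + j + 1)) = c j * (j - n)) (z : ℂ) :
    opD (opDstar fun w => gaussian w * ∑ k ∈ range (n + 1), c k * zConjMonomial (p + k) (q + k) w) z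
      = 4 * (n + p + 1) *
        (gaussian z * ∑ k ∈ range (n + 1), c k * zConjMonomial (p + k) (q + k) z) := by
  rw [opD_opDstar_gaussian_mul
    (fun w => HasWirtingerAt.sum fun k _ => (hasWirtingerAt_zConjMonomial _ _ w).const_mul (c k))
    (HasWirtingerAt.sum fun k _ =>
      ((hasWirtingerAt_zConjMonomial _ _ z).const_mul _).const_mul (c k)),
    sum_mul_zConjMonomial_pred_pred c hpq hc, mul_sum, ← sum_add_distrib, ← sum_sub_distrib,
    mul_sum, mul_sum, mul_sum]
  refine sum_congr rfl fun k _ => ?_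
  rw [mul_left_comm z, mul_natCast_mul_zConjMonomial_pred]
  push_cast
  ring

end LaguerreSum

noncomputable def laguerreCoeff (α : ℝ) (n k : ℕ) : ℝ :=
  (-1) ^ k * (Real.Gamma (n + α + 1) / (Real.Gamma (α + k + 1) * (n - k).factorial)) /
    k.factorial

theorem laguerre_eq_sum (α : ℝ) (n : ℕ) (x : ℝ) :
    laguerre α n x = ∑ k ∈ range (n + 1), laguerreCoeff α n k * x ^ k :=
  sum_congr rfl fun k _ => by rw [laguerreCoeff]; ring

theorem laguerreCoeff_succ_mul {α : ℝ} (hα : -1 < α) {n j : ℕ} (hj : j < n) :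
    laguerreCoeff α n (j + 1) * ((j + 1) * (α + j + 1)) = laguerreCoeff α n j * (j - n) := by
  have hpos : 0 < α + j + 1 := by linarith [(j.cast_nonneg : (0 : ℝ) ≤ j)]
  have hGamma : Real.Gamma (α + (j + 1) + 1) = (α + j + 1) * Real.Gamma (α + j + 1) := by
    rw [← Real.Gamma_add_one hpos.ne']; ring_nf
  have hfact : ((n - j).factorial : ℝ) = (n - j) * (n - (j + 1)).factorial := by
    rw [show n - j = n - (j + 1) + 1 by omega, Nat.factorial_succ, Nat.cast_mul,
      show n - (j + 1) + 1 = n - j by omega, Nat.cast_sub hj.le]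
  have hnj : (n : ℝ) - j ≠ 0 := sub_ne_zero.mpr (by exact_mod_cast hj.ne')
  have hG : Real.Gamma (α + j + 1) ≠ 0 := (Real.Gamma_pos_of_pos hpos).ne'
  simp only [laguerreCoeff, hfact, Nat.factorial_succ, Nat.cast_mul, Nat.cast_succ, hGamma]
  field_simp
  ring

theorem zConjMonomial_add_add (p q k : ℕ) (z : ℂ) :
    zConjMonomial (p + k) (q + k) z = zConjMonomial p q z * (‖z‖ ^ 2 : ℂ) ^ k := by
  simp only [zConjMonomial, ← mul_conj', pow_add, mul_pow]
  ring

theorem fmn_eq_gaussian_mul_sum (m : ℤ) (n : ℕ) {p q : ℕ}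
    (hpq : ∀ z : ℂ, (if 0 ≤ m then z ^ m.natAbs else conj z ^ m.natAbs) = zConjMonomial p q z) :
    fmn m n = fun z => gaussian z * ∑ k ∈ range (n + 1),
      ((Real.sqrt (n.factorial / (Real.pi * (n + m.natAbs).factorial)) *
        laguerreCoeff m.natAbs n k : ℝ) : ℂ) * zConjMonomial (p + k) (q + k) z := by
  funext z
  rw [fmn, hpq, laguerre_eq_sum, ofReal_exp_neg_norm_sq_div_two]
  push_cast
  rw [mul_sum, mul_sum]
  refine sum_congr rfl fun k _ => ?_
  rw [zConjMonomial_add_add]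
  ring

theorem fmn_eigenvalue_equation (m : ℤ) (n : ℕ) (z : ℂ) :
    opD (opDstar (fmn m n)) z =
      4 * ((n : ℂ) + ((max m 0 : ℤ) : ℂ) + 1) * fmn m n z := by
  obtain ⟨p, q, hpq, hsum, hmono, hmax⟩ : ∃ p q : ℕ, p * q = 0 ∧ p + q = m.natAbs ∧
      (∀ z : ℂ, (if 0 ≤ m then z ^ m.natAbs else conj z ^ m.natAbs) = zConjMonomial p q z) ∧
      max m 0 = p := by
    rcases le_or_gt 0 m with hm | hm
    · exact ⟨m.natAbs, 0, mul_zero _, add_zero _, fun z => by simp [hm, zConjMonomial], by omega⟩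
    · exact ⟨0, m.natAbs, zero_mul _, zero_add _, fun z => by simp [hm.not_ge, zConjMonomial],
        by omega⟩
  rw [fmn_eq_gaussian_mul_sum m n hmono, opD_opDstar_gaussian_mul_sum _ hpq _ z, hmax,
    Int.cast_natCast]
  intro j hj
  have hrec := congrArg ((↑) : ℝ → ℂ) <|
    laguerreCoeff_succ_mul (α := m.natAbs) (by linarith [m.natAbs.cast_nonneg (α := ℝ)]) hj
  push_cast at hrec
  have hpqC : (p : ℂ) * q = 0 := by exact_mod_cast hpq
  have hsumC : (p : ℂ) + q = m.natAbs := by exact_mod_cast hsum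
  push_cast
  linear_combination (Real.sqrt (n.factorial / (Real.pi * (n + m.natAbs).factorial)) : ℂ) *
    (hrec + laguerreCoeff m.natAbs n (j + 1) * (hpqC + (j + 1) * hsumC))
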